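/- Let A = diag(λ₁,...,λₙ) with 1 = λ₁ ≤ ... ≤ λₙ. With assumptions Σ_{i=1}^{μ} g_{i,k}² ≤ ε and g_{μ+1,k}² ≥ 2ε for some μ ∈ {1,...,n−1} and ε > 0, the inverse of the Yuan steplength satisfies 1/α_k^Y ≥ (2/3)·λ_{μ+1}. -/

import Mathlib

/-!
Write `P = gₖᵀgₖ` and `Q = gₖᵀAgₖ`. The mass of `gₖ²` on the indices `≥ μ` is at least twice the
mass below `μ`, hence at least `2/3` of `P`, and there the eigenvalues are at least `λ_{μ+1}`; so
`1/α_k^SD = Q/P ≥ (2/3) λ_{μ+1}`. Finally `1/α_k^Y ≥ 1/α_k^SD`, because the square root in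
Yuan's formula is at least `|1/α_{k-1}^SD − 1/α_k^SD|` and `(|c − d| + c + d)/2 = max c d`.
-/

open Matrix

lemma dotProduct_diagonal_mulVec_self {ι : Type*} [Fintype ι] [DecidableEq ι] (lam v : ι → ℝ) :
    v ⬝ᵥ diagonal lam *ᵥ v = ∑ i, lam i * v i ^ 2 := by
  simp only [dotProduct, mulVec_diagonal]
  exact Finset.sum_congr rfl fun i _ => by ring

lemma dotProduct_self_eq_sum_sq {ι : Type*} [Fintype ι] (v : ι → ℝ) :
    v ⬝ᵥ v = ∑ i, v i ^ 2 := by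
  simp only [dotProduct, sq]

lemma two_thirds_mul_sum_le_sum_mul {ι : Type*} [Fintype ι] (p : ι → Prop) [DecidablePred p]
    (lam w : ι → ℝ) (L : ℝ) (hL : 0 ≤ L) (hlam : ∀ i, 0 ≤ lam i)
    (hlamL : ∀ i, ¬ p i → L ≤ lam i) (hw : ∀ i, 0 ≤ w i)
    (hmass : 2 * ∑ i with p i, w i ≤ ∑ i with ¬ p i, w i) :
    2 / 3 * L * ∑ i, w i ≤ ∑ i, lam i * w i := by
  have hlow : 0 ≤ ∑ i with p i, lam i * w i :=
    Finset.sum_nonneg fun i _ => mul_nonneg (hlam i) (hw i)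
  have hhigh : L * ∑ i with ¬ p i, w i ≤ ∑ i with ¬ p i, lam i * w i := by
    rw [Finset.mul_sum]
    exact Finset.sum_le_sum fun i hi =>
      mul_le_mul_of_nonneg_right (hlamL i (Finset.mem_filter.mp hi).2) (hw i)
  rw [← Finset.sum_filter_add_sum_filter_not Finset.univ p w,
    ← Finset.sum_filter_add_sum_filter_not Finset.univ p (fun i => lam i * w i)]
  nlinarith

lemma max_le_half_sqrt_sub_sq_add_add_add (c d t : ℝ) (ht : 0 ≤ t) :
    max c d ≤ (√((c - d) ^ 2 + t) + c + d) / 2 := by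
  have habs : |c - d| ≤ √((c - d) ^ 2 + t) := by
    rw [← Real.sqrt_sq_eq_abs]
    exact Real.sqrt_le_sqrt (by linarith)
  rcases le_total c d with h | h
  · rw [max_eq_right h, abs_of_nonpos (by linarith)] at *
    linarith
  · rw [max_eq_left h, abs_of_nonneg (by linarith)] at *
    linarith

theorem inv_yuan_property_A_general {n : ℕ} (lam : Fin n → ℝ)
    (hmono : Monotone lam) (hn : 0 < n) (h1 : lam ⟨0, hn⟩ = 1)
    (A : Matrix (Fin n) (Fin n) ℝ) (hA : A = Matrix.diagonal lam)
    (gkm1 gk s : Fin n → ℝ)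
    (μ : ℕ) (hμn : μ < n) (ε : ℝ) (hε : 0 < ε)
    (hsum : ∑ i ∈ Finset.univ.filter (fun i : Fin n => (i : ℕ) < μ), gk i ^ 2 ≤ ε)
    (hbig : gk ⟨μ, hμn⟩ ^ 2 ≥ 2 * ε)
    (aSDkm1 aSDk aY : ℝ)
    (hSDkm1 : aSDkm1 = (gkm1 ⬝ᵥ gkm1) / (gkm1 ⬝ᵥ A.mulVec gkm1))
    (hSDk : aSDk = (gk ⬝ᵥ gk) / (gk ⬝ᵥ A.mulVec gk))
    (hY : aY = 2 / (Real.sqrt ((1 / aSDkm1 - 1 / aSDk) ^ 2 +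
        4 * (gk ⬝ᵥ gk) / (s ⬝ᵥ s)) + 1 / aSDkm1 + 1 / aSDk)) :
    1 / aY ≥ 2 / 3 * lam ⟨μ, hμn⟩ := by
  subst hA hSDkm1 hSDk hY
  have hlam : ∀ i, 0 ≤ lam i := fun i => zero_le_one.trans (h1 ▸ hmono (Fin.le_def.mpr (Nat.zero_le _)))
  have hμ_le_tail : gk ⟨μ, hμn⟩ ^ 2 ≤ ∑ i : Fin n with ¬ i.val < μ, gk i ^ 2 :=
    Finset.single_le_sum (fun i _ => sq_nonneg (gk i)) (by simp)
  have hP : 0 < ∑ i, gk i ^ 2 :=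
    (by linarith : 0 < gk ⟨μ, hμn⟩ ^ 2).trans_le
      (Finset.single_le_sum (fun i _ => sq_nonneg (gk i)) (Finset.mem_univ _))
  have hQ : 2 / 3 * lam ⟨μ, hμn⟩ * ∑ i, gk i ^ 2 ≤ ∑ i, lam i * gk i ^ 2 :=
    two_thirds_mul_sum_le_sum_mul (fun i : Fin n => (i : ℕ) < μ) lam (gk · ^ 2) _ (hlam _) hlam
      (fun i hi => hmono (Fin.le_def.mpr (not_lt.mp hi))) (fun i => sq_nonneg _) (by linarith)
  have hSDk_inv : 2 / 3 * lam ⟨μ, hμn⟩ ≤ 1 / (gk ⬝ᵥ gk / (gk ⬝ᵥ diagonal lam *ᵥ gk)) := by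
    rw [one_div_div, dotProduct_diagonal_mulVec_self, dotProduct_self_eq_sum_sq, le_div_iff₀ hP]
    exact hQ
  rw [one_div_div]
  refine hSDk_inv.trans ((le_max_right _ _).trans
    (max_le_half_sqrt_sub_sq_add_add_add _ _ _ ?_))
  rw [dotProduct_self_eq_sum_sq, dotProduct_self_eq_sum_sq]
  positivity

/-- Under the Property-A hypotheses Σ_{i≤μ} g_{i,k}² ≤ ε and g_{μ+1,k}² ≥ 2ε,
the inverse of the Yuan steplength satisfies 1/α_k^Y ≥ (2/3)λ_{μ+1}. -/
theorem inv_yuan_property_A {n : ℕ} (lam : Fin n → ℝ)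
    (hmono : Monotone lam) (hn : 0 < n) (h1 : lam ⟨0, hn⟩ = 1)
    (A : Matrix (Fin n) (Fin n) ℝ) (hA : A = Matrix.diagonal lam)
    (gkm1 gk s : Fin n → ℝ) (hgkm1 : gkm1 ≠ 0) (hgk : gk ≠ 0) (hs : s ≠ 0)
    (μ : ℕ) (hμ1 : 1 ≤ μ) (hμn : μ < n) (ε : ℝ) (hε : 0 < ε)
    (hsum : ∑ i ∈ Finset.univ.filter (fun i : Fin n => (i : ℕ) < μ), gk i ^ 2 ≤ ε)
    (hbig : gk ⟨μ, hμn⟩ ^ 2 ≥ 2 * ε)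
    (aSDkm1 aSDk aY : ℝ)
    (hSDkm1 : aSDkm1 = (gkm1 ⬝ᵥ gkm1) / (gkm1 ⬝ᵥ A.mulVec gkm1))
    (hSDk : aSDk = (gk ⬝ᵥ gk) / (gk ⬝ᵥ A.mulVec gk))
    (hY : aY = 2 / (Real.sqrt ((1 / aSDkm1 - 1 / aSDk) ^ 2 +
        4 * (gk ⬝ᵥ gk) / (s ⬝ᵥ s)) + 1 / aSDkm1 + 1 / aSDk)) :
    1 / aY ≥ 2 / 3 * lam ⟨μ, hμn⟩ :=
  inv_yuan_property_A_general lam hmono hn h1 A hA gkm1 gk s μ hμn ε hε hsum hbig aSDkm1 aSDk aY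
    hSDkm1 hSDk hY
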